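/- In the discrete-time EbDO model, if (X_i, Y_i, X'_i) is any solution, then Y_0 = f_0(X_0). In particular, the net equity at time 0 is uniquely determined by the gross equity X_0 and the functions f_i. -/

import Mathlib

/-!
Backward induction on `i` shows `Y i = f i (X' i)` a.s. for every `i ≤ n`. At `i = n` this is the
terminal condition. If it holds at `i + 1`, inverting `Y = f (X')` and `X' = X - h(Y)` gives
`Y (i+1) = g (i+1) (X (i+1)) = g (i+1) (X' i * Z (i+1))`. Since `X' i` is `ℱ i`-measurable and
`Z (i+1)` is independent of `ℱ i`, the freezing lemma evaluates the martingale step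
`Y i = E[Y (i+1) | ℱ i]` as `x ↦ E[g (i+1) (x * Z (i+1))] = f i x` at `x = X' i`.
-/

open Set MeasureTheory ProbabilityTheory

lemma StrictMonoOn.strictMonoOn_of_rightInvOn {α β : Type*} [LinearOrder α] [Preorder β]
    {φ : α → β} {ψ : β → α} {s : Set α} {t : Set β} (hφ : StrictMonoOn φ s) (hψ : MapsTo ψ t s)
    (hinv : RightInvOn ψ φ t) : StrictMonoOn ψ t := by
  intro a ha b hb hab
  by_contra! hle
  have := hφ.monotoneOn (hψ hb) (hψ ha) hle
  rw [hinv ha, hinv hb] at this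
  exact (this.trans_lt hab).false

lemma MonotoneOn.measurable_comp_max {g : ℝ → ℝ} {a : ℝ} (hg : MonotoneOn g (Ici a)) :
    Measurable fun x => g (max x a) :=
  Monotone.measurable fun x y hxy =>
    hg (le_max_right x a) (le_max_right y a) (max_le_max_right a hxy)

namespace ProbabilityTheory

variable {Ω α β : Type*} {m : MeasurableSpace Ω} [mΩ : MeasurableSpace Ω] {P : Measure Ω}
  [MeasurableSpace α] [mβ : MeasurableSpace β] {ξ : Ω → α} {Z : Ω → β} {F : α × β → ℝ}

lemma integral_comp_prodMk_eq_integral_map (hZ : Measurable Z) (hF : Measurable F) (x : α) :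
    ∫ ω, F (x, Z ω) ∂P = ∫ z, F (x, z) ∂(P.map Z) :=
  (integral_map hZ.aemeasurable (hF.comp measurable_prodMk_left).aestronglyMeasurable).symm

lemma iIndepFun.indep_iSup_comap_of_notMem {ι : Type*} {Z : ι → Ω → β}
    (hZ : ∀ i, Measurable (Z i)) (hind : iIndepFun Z P) {s : Finset ι} {k : ι} (hk : k ∉ s) :
    Indep (⨆ j ∈ s, mβ.comap (Z j)) (mβ.comap (Z k)) P := by
  simpa using indep_iSup_of_disjoint (S := {j | j ∈ s}) (fun j => (hZ j).comap_le) hind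
    (disjoint_singleton_right.mpr hk)

variable [IsProbabilityMeasure P]

lemma stronglyMeasurable_integral_comp_prodMk (hZ : Measurable Z) (hF : Measurable F) :
    StronglyMeasurable fun x => ∫ ω, F (x, Z ω) ∂P := by
  simp_rw [integral_comp_prodMk_eq_integral_map hZ hF]
  exact hF.stronglyMeasurable.integral_prod_right'

lemma IndepFun.integrable_prod_map (hind : IndepFun ξ Z P) (hξ : Measurable ξ) (hZ : Measurable Z)
    (hF : Measurable F) (hint : Integrable (fun ω => F (ξ ω, Z ω)) P) :
    Integrable F ((P.map ξ).prod (P.map Z)) := by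
  rw [← (indepFun_iff_map_prod_eq_prod_map_map hξ.aemeasurable hZ.aemeasurable).mp hind]
  exact (integrable_map_measure hF.aestronglyMeasurable (hξ.prodMk hZ).aemeasurable).mpr hint

lemma IndepFun.integrable_integral_comp (hind : IndepFun ξ Z P) (hξ : Measurable ξ)
    (hZ : Measurable Z) (hF : Measurable F) (hint : Integrable (fun ω => F (ξ ω, Z ω)) P) :
    Integrable (fun ω => ∫ ω', F (ξ ω, Z ω') ∂P) P := by
  simp_rw [integral_comp_prodMk_eq_integral_map hZ hF]
  have := (hind.integrable_prod_map hξ hZ hF hint).integral_prod_left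
  exact (integrable_map_measure this.aestronglyMeasurable hξ.aemeasurable).mp this

lemma IndepFun.integral_comp_eq_integral_integral (hind : IndepFun ξ Z P) (hξ : Measurable ξ)
    (hZ : Measurable Z) (hF : Measurable F) (hint : Integrable (fun ω => F (ξ ω, Z ω)) P) :
    ∫ ω, F (ξ ω, Z ω) ∂P = ∫ ω, ∫ ω', F (ξ ω, Z ω') ∂P ∂P := by
  simp_rw [integral_comp_prodMk_eq_integral_map hZ hF]
  rw [← integral_map hξ.aemeasurable
      hF.stronglyMeasurable.integral_prod_right'.aestronglyMeasurable,
    ← integral_prod F (hind.integrable_prod_map hξ hZ hF hint),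
    ← (indepFun_iff_map_prod_eq_prod_map_map hξ.aemeasurable hZ.aemeasurable).mp hind,
    integral_map (hξ.prodMk hZ).aemeasurable hF.aestronglyMeasurable]

theorem condExp_comp_ae_eq_integral_of_indep (hm : m ≤ mΩ) {W : Ω → α}
    (hW : Measurable[m] W) (hZ : Measurable Z) (hindep : Indep m (mβ.comap Z) P)
    (hF : Measurable F) (hint : Integrable (fun ω => F (W ω, Z ω)) P) :
    P[fun ω => F (W ω, Z ω)|m] =ᵐ[P] fun ω => ∫ ω', F (W ω, Z ω') ∂P := by
  have hψ := stronglyMeasurable_integral_comp_prodMk (P := P) hZ hF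
  have hWZ : IndepFun W Z P := indep_of_indep_of_le_left hindep hW.comap_le
  refine (ae_eq_condExp_of_forall_setIntegral_eq hm hint
    (fun s _ _ => (hWZ.integrable_integral_comp (hW.mono hm le_rfl) hZ hF hint).integrableOn)
    (fun s hs _ => ?_) (hψ.comp_measurable hW).aestronglyMeasurable).symm
  -- test against a set `s ∈ m` by freezing the `m`-measurable pair `(W, 1_s)`
  have hξ : Measurable[m] fun ω => (W ω, s.indicator (fun _ => (1 : ℝ)) ω) :=
    hW.prodMk ((measurable_const : Measurable[m] fun _ : Ω => (1 : ℝ)).indicator hs)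
  have hξZ : IndepFun (fun ω => (W ω, s.indicator (fun _ => (1 : ℝ)) ω)) Z P :=
    indep_of_indep_of_le_left hindep hξ.comap_le
  have hG : Measurable fun p : (α × ℝ) × β => p.1.2 * F (p.1.1, p.2) := by fun_prop
  have hGint : Integrable (fun ω => s.indicator (fun _ => (1 : ℝ)) ω * F (W ω, Z ω)) P := by
    refine (hint.indicator (hm s hs)).congr (.of_forall fun ω => ?_)
    by_cases hω : ω ∈ s <;> simp [hω]
  have hsplit := hξZ.integral_comp_eq_integral_integral (hξ.mono hm le_rfl) hZ hG hGint
  simp only [integral_const_mul] at hsplit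
  rw [← integral_indicator (hm s hs), ← integral_indicator (hm s hs)]
  convert hsplit.symm using 1 <;> refine integral_congr_ae (.of_forall fun ω => ?_) <;>
    by_cases hω : ω ∈ s <;> simp [hω]

theorem condExp_comp_mul_ae_eq_integral_of_indep (hm : m ≤ mΩ) {W Z : Ω → ℝ}
    (hW : Measurable[m] W) (hW0 : ∀ᵐ ω ∂P, 0 ≤ W ω) (hZ : Measurable Z)
    (hZ0 : ∀ᵐ ω ∂P, 0 ≤ Z ω) (hindep : Indep m (MeasurableSpace.comap Z inferInstance) P)
    {g : ℝ → ℝ} (hg : MonotoneOn g (Ici 0)) (hint : Integrable (fun ω => g (W ω * Z ω)) P) :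
    P[fun ω => g (W ω * Z ω)|m] =ᵐ[P] fun ω => ∫ ω', g (W ω * Z ω') ∂P := by
  set G : ℝ → ℝ := fun x => g (max x 0)
  have hGg {x : ℝ} (hx : 0 ≤ x) : G x = g x := by simp only [G, max_eq_left hx]
  have hGWZ : (fun ω => G (W ω * Z ω)) =ᵐ[P] fun ω => g (W ω * Z ω) := by
    filter_upwards [hW0, hZ0] with ω hw hz using hGg (mul_nonneg hw hz)
  have hG : Measurable fun p : ℝ × ℝ => G (p.1 * p.2) :=
    hg.measurable_comp_max.comp (measurable_fst.mul measurable_snd)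
  calc P[fun ω => g (W ω * Z ω)|m]
      =ᵐ[P] P[fun ω => G (W ω * Z ω)|m] := condExp_congr_ae hGWZ.symm
    _ =ᵐ[P] fun ω => ∫ ω', G (W ω * Z ω') ∂P :=
      condExp_comp_ae_eq_integral_of_indep hm hW hZ hindep hG (hint.congr hGWZ.symm)
    _ =ᵐ[P] fun ω => ∫ ω', g (W ω * Z ω') ∂P := by
      filter_upwards [hW0] with ω hw
      exact integral_congr_ae (by filter_upwards [hZ0] with ω' hz using hGg (mul_nonneg hw hz))

end ProbabilityTheory

namespace EbDO

variable {Ω : Type*} {m : MeasurableSpace Ω} [mΩ : MeasurableSpace Ω] {P : Measure Ω}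
  [IsProbabilityMeasure P]

theorem backward_step (hm : m ≤ mΩ) {Z W X X' Y Y₀ : Ω → ℝ} {f₀ f finv h g : ℝ → ℝ}
    (hZ : Measurable Z) (hZ0 : ∀ᵐ ω ∂P, 0 ≤ Z ω)
    (hindep : Indep m (MeasurableSpace.comap Z inferInstance) P)
    (hfinv_left : ∀ x ∈ Ici (0 : ℝ), finv (f x) = x) (hg_mono : MonotoneOn g (Ici 0))
    (hg_left : ∀ y ∈ Ici (0 : ℝ), g (finv y + h y) = y)
    (hf₀ : ∀ x ∈ Ici (0 : ℝ), f₀ x = ∫ ω, g (x * Z ω) ∂P)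
    (hW : Measurable[m] W) (hW0 : ∀ᵐ ω ∂P, 0 ≤ W ω) (hY0 : ∀ᵐ ω ∂P, 0 ≤ Y ω)
    (hX'0 : ∀ᵐ ω ∂P, 0 ≤ X' ω) (hX : ∀ᵐ ω ∂P, X ω = W ω * Z ω)
    (hX' : ∀ᵐ ω ∂P, X' ω = X ω - h (Y ω)) (hY : ∀ᵐ ω ∂P, Y ω = f (X' ω))
    (hY_int : Integrable Y P) (hY_mart : P[Y|m] =ᵐ[P] Y₀) :
    ∀ᵐ ω ∂P, Y₀ ω = f₀ (W ω) := by
  have hYg : Y =ᵐ[P] fun ω => g (W ω * Z ω) := by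
    filter_upwards [hX, hX', hY, hY0, hX'0] with ω hX hX' hY hY0 hX'0
    have hfinvY : finv (Y ω) = X' ω := hY ▸ hfinv_left _ hX'0
    calc Y ω = g (finv (Y ω) + h (Y ω)) := (hg_left _ hY0).symm
      _ = g (W ω * Z ω) := by rw [hfinvY, hX', sub_add_cancel, hX]
  have hY₀ := hY_mart.symm.trans <| (condExp_congr_ae hYg).trans <|
    condExp_comp_mul_ae_eq_integral_of_indep hm hW hW0 hZ hZ0 hindep hg_mono
      (hY_int.congr hYg)
  filter_upwards [hY₀, hW0] with ω hω hw
  rw [hω, hf₀ _ hw]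

end EbDO

theorem ebdo_stmt7_general
    {Ω : Type*} [mΩ : MeasurableSpace Ω] (P : Measure Ω) [IsProbabilityMeasure P]
    (n : ℕ)
    (Z : ℕ → Ω → ℝ) (h f finv g : ℕ → ℝ → ℝ)
    (ℱ : Filtration ℕ mΩ)
    -- the Z_i are independent, positive, integrable, mean 1 (e.g. lognormal):
    (hZ_meas : ∀ i, Measurable (Z i))
    (hZ_pos : ∀ i, ∀ᵐ ω ∂P, 0 < Z i ω)
    (hZ_indep : iIndepFun Z P)
    -- the filtration is generated by the Z_j, j ≤ i:
    (hℱ : ∀ i, (ℱ i : MeasurableSpace Ω)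
      = ⨆ j ∈ Finset.Icc 1 i, MeasurableSpace.comap (Z j) inferInstance)
    -- the payoff functions h_i:
    (hh_mono : ∀ i, MonotoneOn (h i) (Ici 0))
    -- the functions f_i are strictly increasing bijections of [0,∞), f_n = Id:
    (hfn : ∀ y : ℝ, f n y = y)
    (hf_mono : ∀ i, StrictMonoOn (f i) (Ici 0))
    (hfinv_map : ∀ i, ∀ x ∈ Ici (0:ℝ), finv i x ∈ Ici (0:ℝ))
    (hfinv_left : ∀ i, ∀ y ∈ Ici (0:ℝ), finv i (f i y) = y)
    (hfinv_right : ∀ i, ∀ x ∈ Ici (0:ℝ), f i (finv i x) = x)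
    -- g_i is the inverse of finv_i + h_i on [0,∞):
    (hg_map : ∀ i, ∀ x ∈ Ici (0:ℝ), g i x ∈ Ici (0:ℝ))
    (hg_left : ∀ i, ∀ y ∈ Ici (0:ℝ), g i (finv i y + h i y) = y)
    (hg_right : ∀ i, ∀ x ∈ Ici (0:ℝ), finv i (g i x) + h i (g i x) = x)
    -- the backward recursion f_{i-1}(x) = E[(f_i⁻¹ + h_i)⁻¹(x·Z_i)]:
    (hrec : ∀ i, 1 ≤ i → i ≤ n → ∀ x ∈ Ici (0:ℝ),
      f (i - 1) x = ∫ ω, g i (x * Z i ω) ∂P)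
    -- the solution processes:
    (X Y X' : ℕ → Ω → ℝ) (x₀ : ℝ)
    (h_nonneg : ∀ i ≤ n, ∀ᵐ ω ∂P, 0 ≤ X i ω ∧ 0 ≤ Y i ω ∧ 0 ≤ X' i ω)
    (h_adapted : ∀ i ≤ n, StronglyMeasurable[ℱ i] (X i) ∧
      StronglyMeasurable[ℱ i] (Y i) ∧ StronglyMeasurable[ℱ i] (X' i))
    (hXrec : ∀ i, 1 ≤ i → i ≤ n → ∀ᵐ ω ∂P, X i ω = X' (i - 1) ω * Z i ω)
    (hX'rec : ∀ i, 1 ≤ i → i ≤ n → ∀ᵐ ω ∂P, X' i ω = X i ω - h i (Y i ω))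
    (hY_int : ∀ i ≤ n, Integrable (Y i) P)
    (hY_mart : ∀ i j, i ≤ j → j ≤ n → P[Y j|ℱ i] =ᵐ[P] Y i)
    (h_term : ∀ᵐ ω ∂P, Y n ω = X' n ω)
    (h_init : ∀ ω, X 0 ω = x₀ ∧ X' 0 ω = x₀)  :
    ∀ᵐ ω ∂P, Y 0 ω = f 0 x₀ := by
  have hfinv_mono (i : ℕ) : StrictMonoOn (finv i) (Ici 0) :=
    (hf_mono i).strictMonoOn_of_rightInvOn (fun x hx => hfinv_map i x hx) (hfinv_right i)
  have hg_mono (i : ℕ) : MonotoneOn (g i) (Ici 0) :=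
    (((hfinv_mono i).add_monotone (hh_mono i)).strictMonoOn_of_rightInvOn
      (fun x hx => hg_map i x hx) (hg_right i)).monotoneOn
  have hindep (i : ℕ) : Indep (ℱ i) (MeasurableSpace.comap (Z (i + 1)) inferInstance) P := by
    rw [hℱ i]
    exact hZ_indep.indep_iSup_comap_of_notMem hZ_meas (by simp)
  have hY_eq (i : ℕ) (hi : i ≤ n) : ∀ᵐ ω ∂P, Y i ω = f i (X' i ω) := by
    induction hi using Nat.decreasingInduction with
    | self => filter_upwards [h_term] with ω hω using hω.trans (hfn _).symm
    | of_succ i hi ih =>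
      exact EbDO.backward_step (ℱ.le i) (hZ_meas (i + 1))
        ((hZ_pos (i + 1)).mono fun _ hz => hz.le) (hindep i) (hfinv_left (i + 1))
        (hg_mono (i + 1)) (hg_left (i + 1)) (hrec (i + 1) le_add_self hi)
        (h_adapted i hi.le).2.2.measurable ((h_nonneg i hi.le).mono fun _ h => h.2.2)
        ((h_nonneg (i + 1) hi).mono fun _ h => h.2.1)
        ((h_nonneg (i + 1) hi).mono fun _ h => h.2.2) (hXrec (i + 1) le_add_self hi)
        (hX'rec (i + 1) le_add_self hi) ih (hY_int (i + 1) hi) (hY_mart i (i + 1) i.le_succ hi)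
  filter_upwards [hY_eq 0 n.zero_le] with ω hω
  rw [hω, (h_init ω).2]

/-- In the discrete-time EbDO model, any solution (X, Y, X') satisfies
Y_0 = f_0(X_0): the net equity at time 0 is uniquely determined by the gross
equity X_0 and the functions f_i. -/
theorem ebdo_stmt7
    {Ω : Type*} [mΩ : MeasurableSpace Ω] (P : Measure Ω) [IsProbabilityMeasure P]
    (n : ℕ) (hn : 0 < n)
    (Z : ℕ → Ω → ℝ) (h f finv g : ℕ → ℝ → ℝ)
    (ℱ : Filtration ℕ mΩ)
    -- the Z_i are independent, positive, integrable, mean 1 (e.g. lognormal):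
    (hZ_meas : ∀ i, Measurable (Z i))
    (hZ_pos : ∀ i, ∀ᵐ ω ∂P, 0 < Z i ω)
    (hZ_int : ∀ i, Integrable (Z i) P)
    (hZ_mean : ∀ i, ∫ ω, Z i ω ∂P = 1)
    (hZ_indep : iIndepFun Z P)
    -- the filtration is generated by the Z_j, j ≤ i:
    (hℱ : ∀ i, (ℱ i : MeasurableSpace Ω)
      = ⨆ j ∈ Finset.Icc 1 i, MeasurableSpace.comap (Z j) inferInstance)
    -- the payoff functions h_i:
    (hh_mono : ∀ i, MonotoneOn (h i) (Ici 0))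
    (hh_map : ∀ i, ∀ y ∈ Ici (0:ℝ), h i y ∈ Ici (0:ℝ))
    (hh0 : ∀ i, h i 0 = 0)
    -- the functions f_i are strictly increasing bijections of [0,∞), f_n = Id:
    (hfn : ∀ y : ℝ, f n y = y)
    (hf_mono : ∀ i, StrictMonoOn (f i) (Ici 0))
    (hf_map : ∀ i, ∀ y ∈ Ici (0:ℝ), f i y ∈ Ici (0:ℝ))
    (hf0 : ∀ i, f i 0 = 0)
    (hfinv_map : ∀ i, ∀ x ∈ Ici (0:ℝ), finv i x ∈ Ici (0:ℝ))
    (hfinv_left : ∀ i, ∀ y ∈ Ici (0:ℝ), finv i (f i y) = y)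
    (hfinv_right : ∀ i, ∀ x ∈ Ici (0:ℝ), f i (finv i x) = x)
    -- g_i is the inverse of finv_i + h_i on [0,∞):
    (hg_map : ∀ i, ∀ x ∈ Ici (0:ℝ), g i x ∈ Ici (0:ℝ))
    (hg_left : ∀ i, ∀ y ∈ Ici (0:ℝ), g i (finv i y + h i y) = y)
    (hg_right : ∀ i, ∀ x ∈ Ici (0:ℝ), finv i (g i x) + h i (g i x) = x)
    -- the backward recursion f_{i-1}(x) = E[(f_i⁻¹ + h_i)⁻¹(x·Z_i)]:
    (hrec : ∀ i, 1 ≤ i → i ≤ n → ∀ x ∈ Ici (0:ℝ),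
      f (i - 1) x = ∫ ω, g i (x * Z i ω) ∂P)
    -- the solution processes:
    (X Y X' : ℕ → Ω → ℝ) (x₀ : ℝ) (hx₀ : 0 ≤ x₀)
    (h_nonneg : ∀ i ≤ n, ∀ᵐ ω ∂P, 0 ≤ X i ω ∧ 0 ≤ Y i ω ∧ 0 ≤ X' i ω)
    (h_adapted : ∀ i ≤ n, StronglyMeasurable[ℱ i] (X i) ∧
      StronglyMeasurable[ℱ i] (Y i) ∧ StronglyMeasurable[ℱ i] (X' i))
    (hXrec : ∀ i, 1 ≤ i → i ≤ n → ∀ᵐ ω ∂P, X i ω = X' (i - 1) ω * Z i ω)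
    (hX'rec : ∀ i, 1 ≤ i → i ≤ n → ∀ᵐ ω ∂P, X' i ω = X i ω - h i (Y i ω))
    (hY_int : ∀ i ≤ n, Integrable (Y i) P)
    (hY_mart : ∀ i j, i ≤ j → j ≤ n → P[Y j|ℱ i] =ᵐ[P] Y i)
    (h_term : ∀ᵐ ω ∂P, Y n ω = X' n ω)
    (h_init : ∀ ω, X 0 ω = x₀ ∧ X' 0 ω = x₀)  :
    ∀ᵐ ω ∂P, Y 0 ω = f 0 x₀ :=
  ebdo_stmt7_general (mΩ := mΩ) P n Z h f finv g ℱ hZ_meas hZ_pos hZ_indep hℱ hh_mono hfn hf_mono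
    hfinv_map hfinv_left hfinv_right hg_map hg_left hg_right hrec X Y X' x₀ h_nonneg h_adapted hXrec
    hX'rec hY_int hY_mart h_term h_init
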